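/- arXiv:1302.3207 — 3 statements merged into one kernel-verified Lean document; each statement's English description precedes it below -/
import Mathlib

section
/- Let P, Q be orthogonal projections on a complex Hilbert space H with ‖P - Q‖ < 1. Set A := I + P(Q - P)P (which is positive and invertible) and T := Q A^{-1/2} P. Then T*T = P. -/
/-!
Write `A = 1 + P (Q - P) P`. Since `P A = A P = P Q P`, the operator `P` commutes with `A`, hence
with `A^{-1/2}` by the continuous functional calculus, and
`T* T = P A^{-1/2} Q A^{-1/2} P = A^{-1/2} (P Q P) A^{-1/2} = P A^{-1/2} A A^{-1/2} = P`.
For this `A^{-1/2}` must be a genuine inverse: `A = (1 - P) + P Q P ≥ 0`, and `A = 1 - P (P - Q) P`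
is invertible because `‖P (P - Q) P‖ ≤ ‖P - Q‖ < 1`.
-/

section Ring

variable {R : Type*} [Ring R] {p : R}

theorem IsIdempotentElem.mul_sub_self_mul (hp : IsIdempotentElem p) (q : R) :
    p * (q - p) * p = p * q * p - p := by
  rw [mul_sub, sub_mul, hp.eq, hp.eq]

theorem IsIdempotentElem.mul_one_add_mul_sub_mul (hp : IsIdempotentElem p) (q : R) :
    p * (1 + p * (q - p) * p) = p * q * p := by
  rw [hp.mul_sub_self_mul, mul_add, mul_one, mul_sub, ← mul_assoc, ← mul_assoc, hp.eq]
  abel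

theorem IsIdempotentElem.one_add_mul_sub_mul_mul (hp : IsIdempotentElem p) (q : R) :
    (1 + p * (q - p) * p) * p = p * q * p := by
  rw [hp.mul_sub_self_mul, add_mul, one_mul, sub_mul, mul_assoc _ p p, hp.eq]
  abel

theorem IsIdempotentElem.commute_one_add_mul_sub_mul (hp : IsIdempotentElem p) (q : R) :
    Commute p (1 + p * (q - p) * p) :=
  (hp.mul_one_add_mul_sub_mul q).trans (hp.one_add_mul_sub_mul_mul q).symm

theorem star_mul_self_eq_of_commute [StarRing R] (hp : IsSelfAdjoint p)
    {q a b : R} (hq : IsStarProjection q) (hb : IsSelfAdjoint b) (hpb : Commute p b)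
    (hpa : p * q * p = p * a) (hbab : b * a * b = 1) :
    star (q * b * p) * (q * b * p) = p := by
  have hqq (x : R) : q * (q * x) = q * x := by rw [← mul_assoc, hq.isIdempotentElem.eq]
  rw [mul_assoc q b p, ← hpb.eq, ← mul_assoc q p b]
  calc star (q * p * b) * (q * p * b) = b * (p * q * p) * b := by
        simp only [star_mul, hp.star_eq, hq.isSelfAdjoint.star_eq, hb.star_eq,
          mul_assoc, hqq]
    _ = p * (b * a * b) := by
        rw [hpa, ← mul_assoc b p, ← hpb.eq]
        simp only [mul_assoc]
    _ = p := by rw [hbab, mul_one]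

end Ring

theorem IsStarProjection.one_add_mul_sub_mul_nonneg {R : Type*} [Ring R] [StarRing R]
    [PartialOrder R] [StarOrderedRing R] {p q : R} (hp : IsStarProjection p)
    (hq : IsStarProjection q) : 0 ≤ 1 + p * (q - p) * p := by
  have hsplit : 1 + p * (q - p) * p = (1 - p) + p * q * p := by
    rw [hp.isIdempotentElem.mul_sub_self_mul]
    abel
  rw [hsplit]
  exact add_nonneg hp.one_sub_nonneg (hp.isSelfAdjoint.conjugate_nonneg hq.nonneg)

theorem isUnit_one_add_mul_sub_mul {R : Type*} [NormedRing R] [HasSummableGeomSeries R]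
    {p q : R} (hp : ‖p‖ ≤ 1) (hpq : ‖p - q‖ < 1) : IsUnit (1 + p * (q - p) * p) := by
  have hnorm : ‖p * (p - q) * p‖ < 1 := calc
    ‖p * (p - q) * p‖ ≤ ‖p‖ * ‖p - q‖ * ‖p‖ := norm_mul₃_le
    _ ≤ 1 * ‖p - q‖ * 1 := by gcongr
    _ < 1 := by simpa using hpq
  convert isUnit_one_sub_of_norm_lt_one hnorm using 1
  noncomm_ring

theorem Commute.ringInverse_right {M₀ : Type*} [MonoidWithZero M₀] {a b : M₀}
    (h : Commute a b) : Commute a (Ring.inverse b) := by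
  by_cases hb : IsUnit b
  · obtain ⟨u, rfl⟩ := hb
    rw [Ring.inverse_unit]
    exact h.units_inv_right
  · rw [Ring.inverse_non_unit b hb]
    exact Commute.zero_right a

section CStarAlgebra

variable {A : Type*} [CStarAlgebra A] [PartialOrder A] [StarOrderedRing A]

theorem Commute.ringInverse_sqrt_right {a b : A} (h : Commute b a) :
    Commute b (Ring.inverse (CFC.sqrt a)) := by
  have hsqrt : Commute b (CFC.sqrt a) := by
    rw [CFC.sqrt_eq_cfc]
    exact (h.symm.cfc_nnreal _).symm
  exact hsqrt.ringInverse_right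

theorem IsStrictlyPositive.ringInverse_sqrt_mul_mul_ringInverse_sqrt {a : A}
    (ha : IsStrictlyPositive a) :
    Ring.inverse (CFC.sqrt a) * a * Ring.inverse (CFC.sqrt a) = 1 := by
  have hs : IsUnit (CFC.sqrt a) := ha.isUnit_cfcSqrt
  nth_rewrite 2 [← CFC.sqrt_mul_sqrt_self a]
  rw [← mul_assoc, Ring.inverse_mul_cancel _ hs, one_mul, Ring.mul_inverse_cancel _ hs]

end CStarAlgebra

theorem stmt_5 (H : Type*) [NormedAddCommGroup H] [InnerProductSpace ℂ H] [CompleteSpace H]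
    (P Q : H →L[ℂ] H)
    (hP : IsIdempotentElem P) (hP' : IsSelfAdjoint P)
    (hQ : IsIdempotentElem Q) (hQ' : IsSelfAdjoint Q)
    (h : ‖P - Q‖ < 1) :
    star (Q * Ring.inverse (CFC.sqrt (1 + P * (Q - P) * P)) * P) *
      (Q * Ring.inverse (CFC.sqrt (1 + P * (Q - P) * P)) * P) = P := by
  have hp : IsStarProjection P := ⟨hP, hP'⟩
  have hq : IsStarProjection Q := ⟨hQ, hQ'⟩
  have hA : IsStrictlyPositive (1 + P * (Q - P) * P) :=
    (isUnit_one_add_mul_sub_mul (hp.norm_le P) h).isStrictlyPositive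
      (hp.one_add_mul_sub_mul_nonneg hq)
  exact star_mul_self_eq_of_commute hP' hq (CFC.sqrt_nonneg _).isSelfAdjoint.ringInverse
    (Commute.ringInverse_sqrt_right (hP.commute_one_add_mul_sub_mul Q))
    (hP.mul_one_add_mul_sub_mul Q).symm hA.ringInverse_sqrt_mul_mul_ringInverse_sqrt
end

section
/- Let p, q be projections in a unital C*-algebra A with ‖p - q‖ < 1. Then there exists a partial isometry t ∈ A (t t* t = t) such that t*t = p and t t* = q. -/
/-!
With `x = q p + (1 - q) (1 - p)` one has `x p = q x` and `x⋆ x = x x⋆ = 1 - (p - q)²`, which is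
strictly positive because `‖p - q‖ < 1`. The unitary part `u = x (x⋆ x)^(-1/2)` of the polar
decomposition of `x` still intertwines `p` and `q`, so `t = u p` satisfies `t⋆ t = p`, `t t⋆ = q`.
-/

open CFC

section Ring

variable {A : Type*} [Ring A]

def projIntertwiner (p q : A) : A := q * p + (1 - q) * (1 - p)

variable {p q : A}

lemma projIntertwiner_mul (hp : IsIdempotentElem p) (hq : IsIdempotentElem q) :
    projIntertwiner p q * p = q * projIntertwiner p q := by
  simp only [projIntertwiner, add_mul, mul_add, sub_mul, mul_sub, one_mul, mul_one, mul_assoc,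
    hp.eq]
  rw [← mul_assoc q q, hq.eq]
  noncomm_ring

variable [StarRing A]

lemma star_projIntertwiner (hp : IsSelfAdjoint p) (hq : IsSelfAdjoint q) :
    star (projIntertwiner p q) = p * q + (1 - p) * (1 - q) := by
  simp [projIntertwiner, star_mul, hp.star_eq, hq.star_eq]

lemma star_projIntertwiner_mul_self (hp : IsIdempotentElem p) (hp' : IsSelfAdjoint p)
    (hq : IsIdempotentElem q) (hq' : IsSelfAdjoint q) :
    star (projIntertwiner p q) * projIntertwiner p q = 1 - (p - q) ^ 2 := by
  have hqq : ∀ z : A, q * (q * z) = q * z := fun z => by rw [← mul_assoc, hq.eq]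
  rw [star_projIntertwiner hp' hq', projIntertwiner, sq]
  simp only [mul_sub, sub_mul, mul_add, add_mul, mul_one, one_mul, mul_assoc, hp.eq, hq.eq, hqq]
  abel

lemma projIntertwiner_mul_star_self (hp : IsIdempotentElem p) (hp' : IsSelfAdjoint p)
    (hq : IsIdempotentElem q) (hq' : IsSelfAdjoint q) :
    projIntertwiner p q * star (projIntertwiner p q) = 1 - (p - q) ^ 2 := by
  have hpp : ∀ z : A, p * (p * z) = p * z := fun z => by rw [← mul_assoc, hp.eq]
  rw [star_projIntertwiner hp' hq', projIntertwiner, sq]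
  simp only [mul_sub, sub_mul, mul_add, add_mul, mul_one, one_mul, mul_assoc, hp.eq, hq.eq, hpp]
  abel

lemma commute_star_mul_self_of_mul_eq_mul {x : A} (hp : IsSelfAdjoint p) (hq : IsSelfAdjoint q)
    (h : x * p = q * x) : Commute (star x * x) p := by
  have h' : p * star x = star x * q := by
    simpa [star_mul, hp.star_eq, hq.star_eq] using congrArg star h
  calc star x * x * p = star x * q * x := by rw [mul_assoc, h, mul_assoc]
    _ = p * (star x * x) := by rw [← h', mul_assoc]

lemma exists_partialIsometry_of_unitary_mul_eq_mul {u : A} (hu : u ∈ unitary A)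
    (hp : IsIdempotentElem p) (hp' : IsSelfAdjoint p) (h : u * p = q * u) :
    ∃ t : A, t * star t * t = t ∧ star t * t = p ∧ t * star t = q := by
  have hstar : star (u * p) = p * star u := by rw [star_mul, hp'.star_eq]
  have hq : u * p * star (u * p) = q := by
    rw [hstar, mul_assoc u, ← mul_assoc p, hp.eq, ← mul_assoc, h, mul_assoc,
      Unitary.mul_star_self_of_mem hu, mul_one]
  refine ⟨u * p, ?_, ?_, hq⟩
  · rw [hq, ← mul_assoc, ← h, mul_assoc, hp.eq]
  · rw [hstar, mul_assoc, ← mul_assoc (star u), Unitary.star_mul_self_of_mem hu, one_mul, hp.eq]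

end Ring

section CStarAlgebra

variable {A : Type*} [CStarAlgebra A] [PartialOrder A] [StarOrderedRing A]

lemma IsSelfAdjoint.isStrictlyPositive_one_sub {a : A} (ha : IsSelfAdjoint a) (h : ‖a‖ < 1) :
    IsStrictlyPositive (1 - a) := by
  have hle : algebraMap ℝ A (1 - ‖a‖) ≤ 1 - a := by
    rw [map_sub, map_one]
    exact sub_le_sub_left ha.le_algebraMap_norm_self 1
  exact (isStrictlyPositive_algebraMap (sub_pos.mpr h)).of_le hle

lemma mul_rpow_neg_one_half_mem_unitary {x : A} [IsStarNormal x]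
    (hx : IsStrictlyPositive (star x * x)) :
    x * (star x * x) ^ (-(1 / 2) : ℝ) ∈ unitary A := by
  have hnormal : Commute (star x) x := star_comm_self' x
  have hsx : Commute ((star x * x) ^ (-(1 / 2) : ℝ)) x := by
    rw [rpow_def]; exact (hnormal.mul_left (Commute.refl x)).cfc_nnreal _
  have hsx' : Commute ((star x * x) ^ (-(1 / 2) : ℝ)) (star x) := by
    rw [rpow_def]; exact ((Commute.refl (star x)).mul_left hnormal.symm).cfc_nnreal _
  have hconj := conjugate_rpow_neg_one_half (star x * x)
  set s := (star x * x) ^ (-(1 / 2) : ℝ)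
  have hs : IsSelfAdjoint s := rpow_nonneg.isSelfAdjoint
  refine Unitary.mem_iff.mpr ⟨?_, ?_⟩
  · rw [star_mul, hs.star_eq, ← hconj]
    noncomm_ring
  · calc x * s * star (x * s) = s * (x * star x) * s := by
          rw [star_mul, hs.star_eq, ← hsx.eq, hsx'.eq]; noncomm_ring
      _ = 1 := by rw [← hnormal.eq, hconj]

lemma mul_rpow_neg_one_half_mul_eq_mul {x p q : A} (hp : IsSelfAdjoint p) (hq : IsSelfAdjoint q)
    (h : x * p = q * x) :
    x * (star x * x) ^ (-(1 / 2) : ℝ) * p = q * (x * (star x * x) ^ (-(1 / 2) : ℝ)) := by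
  have hsp : Commute ((star x * x) ^ (-(1 / 2) : ℝ)) p := by
    rw [rpow_def]; exact (commute_star_mul_self_of_mul_eq_mul hp hq h).cfc_nnreal _
  rw [mul_assoc, hsp.eq, ← mul_assoc, h, mul_assoc]

end CStarAlgebra

theorem stmt_12 (A : Type*) [CStarAlgebra A] (p q : A)
    (hp : IsIdempotentElem p) (hp' : IsSelfAdjoint p)
    (hq : IsIdempotentElem q) (hq' : IsSelfAdjoint q)
    (h : ‖p - q‖ < 1) :
    ∃ t : A, t * star t * t = t ∧ star t * t = p ∧ t * star t = q := by
  let _ := CStarAlgebra.spectralOrder A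
  let _ := CStarAlgebra.spectralOrderedRing A
  set x := projIntertwiner p q
  have hxx : star x * x = 1 - (p - q) ^ 2 := star_projIntertwiner_mul_self hp hp' hq hq'
  have : IsStarNormal x :=
    ⟨hxx.trans (projIntertwiner_mul_star_self hp hp' hq hq').symm⟩
  have hsq : ‖(p - q) ^ 2‖ < 1 :=
    (norm_pow_le' _ two_pos).trans_lt (by nlinarith [norm_nonneg (p - q)])
  have hpos : IsStrictlyPositive (star x * x) :=
    hxx ▸ ((hp'.sub hq').pow 2).isStrictlyPositive_one_sub hsq
  exact exists_partialIsometry_of_unitary_mul_eq_mul (mul_rpow_neg_one_half_mem_unitary hpos)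
    hp hp' (mul_rpow_neg_one_half_mul_eq_mul hp' hq' (projIntertwiner_mul hp hq))
end

section
/- Let P and Q be orthogonal projections on a complex Hilbert space with ‖P - Q‖ < 1. Then dim(range P) = dim(range Q) (the ranges are isometrically isomorphic). -/
/-!
Kato's intertwiner `a = q p + (1 - q)(1 - p)` of two projections satisfies `a p = q a` and
`a⋆a = a a⋆ = 1 - (p - q)²`. When `‖p - q‖ < 1` this element is invertible, so the unitary part
`u = a (a⋆a)^(-1/2)` of `a` still intertwines `p` and `q`, and hence carries the range of `P`
isometrically onto the range of `Q`.
-/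

open CFC

def katoIntertwiner {R : Type*} [Ring R] (p q : R) : R := q * p + (1 - q) * (1 - p)

namespace IsIdempotentElem

variable {R : Type*} [Ring R] {p q : R}

lemma katoIntertwiner_mul_katoIntertwiner (hp : IsIdempotentElem p) (hq : IsIdempotentElem q) :
    katoIntertwiner q p * katoIntertwiner p q = 1 - (p - q) ^ 2 := by
  simp only [katoIntertwiner, mul_add, add_mul, mul_sub, sub_mul, mul_one, one_mul, pow_two,
    mul_assoc, hp.eq, hq.eq, hq.mul_self_mul]
  noncomm_ring

lemma katoIntertwiner_mul_left (hp : IsIdempotentElem p) (hq : IsIdempotentElem q) :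
    katoIntertwiner p q * p = q * katoIntertwiner p q := by
  simp only [katoIntertwiner, mul_add, add_mul, mul_sub, sub_mul, mul_one, one_mul, mul_assoc,
    hp.eq, hq.eq, hq.mul_self_mul]
  noncomm_ring

lemma commute_sub_sq (hp : IsIdempotentElem p) (hq : IsIdempotentElem q) :
    Commute p ((p - q) ^ 2) := by
  simp only [Commute, SemiconjBy, mul_sub, sub_mul, pow_two, mul_assoc, hp.eq, hq.eq,
    hp.mul_self_mul]
  noncomm_ring

end IsIdempotentElem

lemma IsStarProjection.star_katoIntertwiner {R : Type*} [Ring R] [StarRing R] {p q : R}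
    (hp : IsStarProjection p) (hq : IsStarProjection q) :
    star (katoIntertwiner p q) = katoIntertwiner q p := by
  simp [katoIntertwiner, hp.isSelfAdjoint.star_eq, hq.isSelfAdjoint.star_eq]

section CStarAlgebra

variable {A : Type*} [CStarAlgebra A] [PartialOrder A] [StarOrderedRing A]

lemma Commute.rpow_left {a b : A} (h : Commute a b) (y : ℝ) : Commute (a ^ y) b :=
  h.cfc_nnreal _

lemma mul_rpow_neg_half_mem_unitary {a : A} (hunit : IsUnit (star a * a))
    (hnormal : star a * a = a * star a) :
    a * (star a * a) ^ (-(1 / 2) : ℝ) ∈ unitary A := by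
  set d := star a * a with hd
  set r := d ^ (-(1 / 2) : ℝ)
  have hr_sa : star r = r := rpow_nonneg.isSelfAdjoint.star_eq
  have hrrd : r * r * d = 1 := by
    conv_lhs => rw [← rpow_one d, ← rpow_add hunit, ← rpow_add hunit]
    norm_num [rpow_zero d]
  have hrd : Commute r d := (Commute.refl d).rpow_left _
  have hra : Commute r a := by
    refine Commute.rpow_left ?_ _
    calc d * a = a * star a * a := by rw [hnormal]
      _ = a * d := by rw [hd, mul_assoc]
  rw [Unitary.mem_iff, star_mul, hr_sa]
  constructor
  · calc r * star a * (a * r) = r * d * r := by simp only [hd, mul_assoc]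
      _ = 1 := by rw [mul_assoc, ← hrd.eq, ← mul_assoc, hrrd]
  · calc a * r * (r * star a) = r * r * (a * star a) := by
          rw [← hra.eq, mul_assoc, ← mul_assoc a, ← hra.eq]; simp only [mul_assoc]
      _ = 1 := by rw [← hnormal, hrrd]

lemma IsStarProjection.exists_unitary_mul_eq_mul_of_norm_sub_lt_one {p q : A}
    (hp : IsStarProjection p) (hq : IsStarProjection q) (h : ‖p - q‖ < 1) :
    ∃ u ∈ unitary A, u * p = q * u := by
  set a := katoIntertwiner p q
  have hpi := hp.isIdempotentElem
  have hqi := hq.isIdempotentElem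
  have hd : star a * a = 1 - (p - q) ^ 2 := by
    rw [hp.star_katoIntertwiner hq, hpi.katoIntertwiner_mul_katoIntertwiner hqi]
  have hnormal : star a * a = a * star a := by
    rw [hd, hp.star_katoIntertwiner hq, hqi.katoIntertwiner_mul_katoIntertwiner hpi,
      ← neg_sub p q, neg_sq]
  have hunit : IsUnit (star a * a) := by
    rw [hd]
    refine (Units.oneSub _ ?_).isUnit
    calc ‖(p - q) ^ 2‖ ≤ ‖p - q‖ ^ 2 := norm_pow_le' _ two_pos
      _ < 1 := pow_lt_one₀ (norm_nonneg _) h two_ne_zero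
  have hrp : Commute ((star a * a) ^ (-(1 / 2) : ℝ)) p := by
    refine Commute.rpow_left ?_ _
    rw [hd]
    exact ((Commute.one_right p).sub_right (hpi.commute_sub_sq hqi)).symm
  refine ⟨_, mul_rpow_neg_half_mem_unitary hunit hnormal, ?_⟩
  rw [mul_assoc, hrp.eq, ← mul_assoc, hpi.katoIntertwiner_mul_left hqi, mul_assoc]

end CStarAlgebra

lemma nonempty_range_linearIsometryEquiv_of_unitary_mul_eq {𝕜 H : Type*} [RCLike 𝕜]
    [NormedAddCommGroup H] [InnerProductSpace 𝕜 H] [CompleteSpace H] {u P Q : H →L[𝕜] H}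
    (hu : u ∈ unitary (H →L[𝕜] H)) (h : u * P = Q * u) :
    Nonempty (LinearMap.range (P : H →ₗ[𝕜] H) ≃ₗᵢ[𝕜] LinearMap.range (Q : H →ₗ[𝕜] H)) := by
  set e := Unitary.linearIsometryEquiv ⟨u, hu⟩
  have hrange : (LinearMap.range (P : H →ₗ[𝕜] H)).map (e : H →ₗ[𝕜] H) =
      LinearMap.range (Q : H →ₗ[𝕜] H) := by
    have hcomp : (e : H →ₗ[𝕜] H) ∘ₗ P = (Q : H →ₗ[𝕜] H) ∘ₗ (e : H →ₗ[𝕜] H) :=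
      congrArg ContinuousLinearMap.toLinearMap h
    rw [← LinearMap.range_comp, hcomp]
    exact LinearMap.range_comp_of_range_eq_top _ (LinearMap.range_eq_top.mpr e.surjective)
  exact ⟨(e.submoduleMap _).trans (LinearIsometryEquiv.ofEq _ _ hrange)⟩

theorem stmt_19 (H : Type*) [NormedAddCommGroup H] [InnerProductSpace ℂ H] [CompleteSpace H]
    (P Q : H →L[ℂ] H)
    (hP : IsIdempotentElem P) (hP' : IsSelfAdjoint P)
    (hQ : IsIdempotentElem Q) (hQ' : IsSelfAdjoint Q)
    (h : ‖P - Q‖ < 1) :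
    Nonempty ((LinearMap.range (P : H →ₗ[ℂ] H)) ≃ₗᵢ[ℂ] (LinearMap.range (Q : H →ₗ[ℂ] H))) := by
  obtain ⟨u, hu, huP⟩ :=
    IsStarProjection.exists_unitary_mul_eq_mul_of_norm_sub_lt_one ⟨hP, hP'⟩ ⟨hQ, hQ'⟩ h
  exact nonempty_range_linearIsometryEquiv_of_unitary_mul_eq hu huP
end
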